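/- Let X be a δ-hyperbolic geodesic metric space, Y an α-quasi-convex subset, and x, x' ∈ X. Let y and y' be η- and η'-projections of x and x' on Y respectively. Then | Δ([x,x'],Y) − d(y,y') | ≤ ε, where ε can be taken to be 3α + 2η + 2η' + 6δ. -/

import Mathlib

open ENNReal

/-- The overlap quantity Δ(Y,Z), valued in ℝ≥0∞. -/
noncomputable def overlap {X : Type*} [MetricSpace X] (Y Z : Set X) : ℝ≥0∞ :=
  ⨆ y ∈ Y, ⨆ y' ∈ Y, ⨆ z ∈ Z, ⨆ z' ∈ Z,
    ENNReal.ofReal ((dist y y' + dist z z' - dist y z - dist y' z') / 2)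

/-- `γ` parametrizes a geodesic from `x` to `x'` (by arc length on
`[0, dist x x']`). -/
def IsGeodesicFrom {X : Type*} [MetricSpace X] (γ : ℝ → X) (x x' : X) : Prop :=
  γ 0 = x ∧ γ (dist x x') = x' ∧
    ∀ s ∈ Set.Icc (0 : ℝ) (dist x x'), ∀ t ∈ Set.Icc (0 : ℝ) (dist x x'),
      dist (γ s) (γ t) = |s - t|

/-!
Upper bound: if `p, p'` lie on the geodesic in the order `x, p, p', x'`, the triangle inequality
through `x` and `x'` shows that the overlap term of `(p, p', z, z')` is at most
that of `(x, x', z, z')`, and the projection property `(x|z)_y ≤ α + η` for `z ∈ Y` bounds the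
latter by `d(y, y')` up to constants.

Lower bound: the overlap term of `(x, x', y, y')` equals `d(y, y') - (x|x')_y - (x'|y)_{y'}`.
The four-point condition at `y` and at `y'` shows that either `(x|x')_y` or `(x|x')_{y'}` is
small, or `(x'|y')_y` and `(x|y)_{y'}` are both small, and in the last case `d(y, y')` itself is
small since `y` and `y'` are almost nearest points.
-/

open Metric Set

section GromovProduct

variable {X : Type*} [PseudoMetricSpace X]

/-- The Gromov product `(x|y)_z`. -/
noncomputable def gromovProduct (z x y : X) : ℝ :=
  (dist z x + dist z y - dist x y) / 2

def IsGromovHyperbolic (X : Type*) [PseudoMetricSpace X] (δ : ℝ) : Prop :=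
  ∀ x y z t : X, min (gromovProduct t x y) (gromovProduct t y z) - δ ≤ gromovProduct t x z

def IsQuasiconvex (α : ℝ) (Y : Set X) : Prop :=
  ∀ x : X, ∀ u ∈ Y, ∀ u' ∈ Y, infDist x Y ≤ gromovProduct x u u' + α

def IsAlmostProjection (η : ℝ) (Y : Set X) (x y : X) : Prop :=
  y ∈ Y ∧ dist x y ≤ infDist x Y + η

variable {Y : Set X} {α η : ℝ} {x y z : X}

theorem IsAlmostProjection.nonneg (hp : IsAlmostProjection η Y x y) : 0 ≤ η := by
  linarith [hp.2, infDist_le_dist_of_mem (x := x) hp.1]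

theorem IsAlmostProjection.dist_le (hp : IsAlmostProjection η Y x y) (hz : z ∈ Y) :
    dist x y ≤ dist x z + η :=
  hp.2.trans (by grw [infDist_le_dist_of_mem hz])

theorem IsAlmostProjection.gromovProduct_le (hY : IsQuasiconvex α Y)
    (hp : IsAlmostProjection η Y x y) (hz : z ∈ Y) : gromovProduct y x z ≤ α + η := by
  have hq := hY x y hp.1 z hz
  simp only [gromovProduct, dist_comm] at hq ⊢
  linarith [hp.2]

end GromovProduct

section Overlap

variable {X : Type*} [MetricSpace X]

theorem overlap_le_ofReal {A B : Set X} {c : ℝ}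
    (h : ∀ p ∈ A, ∀ p' ∈ A, ∀ z ∈ B, ∀ z' ∈ B,
      (dist p p' + dist z z' - dist p z - dist p' z') / 2 ≤ c) :
    overlap A B ≤ ENNReal.ofReal c :=
  iSup₂_le fun p hp => iSup₂_le fun p' hp' => iSup₂_le fun z hz => iSup₂_le fun z' hz' =>
    ENNReal.ofReal_le_ofReal (h p hp p' hp' z hz z' hz')

theorem ofReal_le_overlap {A B : Set X} {p p' z z' : X} (hp : p ∈ A) (hp' : p' ∈ A)
    (hz : z ∈ B) (hz' : z' ∈ B) :
    ENNReal.ofReal ((dist p p' + dist z z' - dist p z - dist p' z') / 2) ≤ overlap A B :=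
  le_iSup₂_of_le p hp <| le_iSup₂_of_le p' hp' <| le_iSup₂_of_le z hz <|
    le_iSup₂_of_le z' hz' le_rfl

end Overlap

section Bounds

variable {X : Type*} [MetricSpace X] {Y : Set X} {α η η' : ℝ} {x x' y y' : X}

theorem IsGeodesicFrom.dist_add_dist_add_dist {γ : ℝ → X} (hγ : IsGeodesicFrom γ x x')
    {s t : ℝ} (hs : s ∈ Icc 0 (dist x x')) (ht : t ∈ Icc 0 (dist x x')) (hst : s ≤ t) :
    dist x (γ s) + dist (γ s) (γ t) + dist (γ t) x' = dist x x' := by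
  obtain ⟨h0, h1, hiso⟩ := hγ
  have hD : (0 : ℝ) ≤ dist x x' := dist_nonneg
  have hxs := hiso 0 ⟨le_rfl, hD⟩ s hs
  have htx' := hiso t ht _ ⟨hD, le_rfl⟩
  rw [h0] at hxs
  rw [h1] at htx'
  rw [hxs, hiso s hs t ht, htx', abs_of_nonpos (by linarith [hs.1]),
    abs_of_nonpos (by linarith), abs_of_nonpos (by linarith [ht.2])]
  ring

theorem sub_dist_sub_dist_le_of_dist_add_dist_add_dist_eq {p p' : X} (z z' : X)
    (h : dist x p + dist p p' + dist p' x' = dist x x') :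
    dist p p' - dist p z - dist p' z' ≤ dist x x' - dist x z - dist x' z' := by
  linarith [dist_triangle x p z, dist_triangle x' p' z', dist_comm p' x']

theorem dist_add_dist_sub_le_of_gromovProduct_le {z z' : X} {a a' : ℝ}
    (hz : gromovProduct y x z ≤ a) (hz' : gromovProduct y' x' z' ≤ a') :
    dist x x' + dist z z' - dist x z - dist x' z' ≤ 2 * dist y y' + 2 * a + 2 * a' := by
  simp only [gromovProduct] at hz hz'
  linarith [dist_triangle4 x y y' x', dist_triangle4 z y y' z', dist_comm x y, dist_comm z y,
    dist_comm y' x', dist_comm x' y']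

theorem overlap_image_geodesic_le {γ : ℝ → X} (hγ : IsGeodesicFrom γ x x')
    (hY : IsQuasiconvex α Y) (hp : IsAlmostProjection η Y x y)
    (hp' : IsAlmostProjection η' Y x' y') :
    overlap (γ '' Icc 0 (dist x x')) Y ≤ ENNReal.ofReal (dist y y' + (2 * α + η + η')) := by
  refine overlap_le_ofReal ?_
  rintro _ ⟨s, hs, rfl⟩ _ ⟨t, ht, rfl⟩ z hz z' hz'
  wlog hst : s ≤ t generalizing s t z z'
  · have := this t ht s hs z' hz' z hz (le_of_not_ge hst)
    linarith [dist_comm (γ s) (γ t), dist_comm z z']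
  have hpp' := sub_dist_sub_dist_le_of_dist_add_dist_add_dist_eq z z'
    (hγ.dist_add_dist_add_dist hs ht hst)
  linarith [dist_add_dist_sub_le_of_gromovProduct_le (hp.gromovProduct_le hY hz)
    (hp'.gromovProduct_le hY hz')]

theorem IsGromovHyperbolic.dist_le_max_add {δ : ℝ} (hX : IsGromovHyperbolic X δ)
    (hδ : 0 ≤ δ) (hY : IsQuasiconvex α Y) (hp : IsAlmostProjection η Y x y)
    (hp' : IsAlmostProjection η' Y x' y') :
    dist y y' ≤ max ((dist x x' + dist y y' - dist x y - dist x' y') / 2) 0 +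
      (2 * α + 2 * η + 2 * η' + 2 * δ) := by
  have hxy' := hp.gromovProduct_le hY hp'.1
  have hx'y := hp'.gromovProduct_le hY hp.1
  have hdy := hp.dist_le hp'.1
  have hdy' := hp'.dist_le hp.1
  have hη := hp.nonneg
  have hη' := hp'.nonneg
  have hmin := hX x x' y' y
  have hmin' := hX x' x y y'
  rcases min_le_iff.1 (by linarith : min (gromovProduct y x x') (gromovProduct y x' y') ≤
      α + η + δ) with hA | hA <;>
  rcases min_le_iff.1 (by linarith : min (gromovProduct y' x' x) (gromovProduct y' x y) ≤
      α + η' + δ) with hB | hB <;>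
  simp only [gromovProduct, dist_comm] at * <;>
  linarith [le_max_left ((dist x x' + dist y y' - dist x y - dist x' y') / 2) 0,
    le_max_right ((dist x x' + dist y y' - dist x y - dist x' y') / 2) 0]

end Bounds

theorem overlap_geodesic_quasiconvex_projections_general
    {X : Type*} [MetricSpace X] (δ : ℝ) (hδ : 0 ≤ δ)
    (hyp : ∀ x y z t : X,
      (dist t x + dist t z - dist x z) / 2 ≥
        min ((dist t x + dist t y - dist x y) / 2)
            ((dist t y + dist t z - dist y z) / 2) - δ)
    (Y : Set X) (α : ℝ) (hα : 0 ≤ α)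
    (hqc : ∀ x : X, ∀ u ∈ Y, ∀ u' ∈ Y,
      Metric.infDist x Y ≤ (dist x u + dist x u' - dist u u') / 2 + α)
    (x x' : X) (γ : ℝ → X) (hγ : IsGeodesicFrom γ x x')
    (y y' : X) (hy : y ∈ Y) (hy' : y' ∈ Y) (η η' : ℝ)
    (hproj : dist x y ≤ Metric.infDist x Y + η)
    (hproj' : dist x' y' ≤ Metric.infDist x' Y + η') :
    overlap (γ '' Set.Icc (0 : ℝ) (dist x x')) Y ≤
        ENNReal.ofReal (dist y y' + (3 * α + 2 * η + 2 * η' + 6 * δ)) ∧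
      ENNReal.ofReal (dist y y') ≤
        overlap (γ '' Set.Icc (0 : ℝ) (dist x x')) Y +
          ENNReal.ofReal (3 * α + 2 * η + 2 * η' + 6 * δ) := by
  have hY : IsQuasiconvex α Y := hqc
  have hp : IsAlmostProjection η Y x y := ⟨hy, hproj⟩
  have hp' : IsAlmostProjection η' Y x' y' := ⟨hy', hproj'⟩
  constructor
  · exact (overlap_image_geodesic_le hγ hY hp hp').trans
      (ENNReal.ofReal_le_ofReal (by linarith [hp.nonneg, hp'.nonneg]))
  · have hxx' := ofReal_le_overlap (A := γ '' Icc 0 (dist x x')) (B := Y)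
      ⟨0, left_mem_Icc.2 dist_nonneg, hγ.1⟩ ⟨_, right_mem_Icc.2 dist_nonneg, hγ.2.1⟩
      hy hy'
    have hX : IsGromovHyperbolic X δ := hyp
    have hlow := hX.dist_le_max_add hδ hY hp hp'
    calc ENNReal.ofReal (dist y y')
        ≤ ENNReal.ofReal (max ((dist x x' + dist y y' - dist x y - dist x' y') / 2) 0 +
            (3 * α + 2 * η + 2 * η' + 6 * δ)) := ENNReal.ofReal_le_ofReal (by linarith)
      _ ≤ ENNReal.ofReal ((dist x x' + dist y y' - dist x y - dist x' y') / 2) +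
            ENNReal.ofReal (3 * α + 2 * η + 2 * η' + 6 * δ) := by
        grw [ENNReal.ofReal_add_le, ENNReal.ofReal_max, ENNReal.ofReal_zero,
          max_zero]
      _ ≤ _ := by gcongr

/-- The overlap of a geodesic [x,x'] with an α-quasi-convex set Y is, up to
ε = 3α + 2η + 2η' + 6δ, the distance between projections of the endpoints. -/
theorem overlap_geodesic_quasiconvex_projections
    {X : Type*} [MetricSpace X] (δ : ℝ) (hδ : 0 ≤ δ)
    (hyp : ∀ x y z t : X,
      (dist t x + dist t z - dist x z) / 2 ≥
        min ((dist t x + dist t y - dist x y) / 2)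
            ((dist t y + dist t z - dist y z) / 2) - δ)
    (Y : Set X) (α : ℝ) (hα : 0 ≤ α)
    (hqc : ∀ x : X, ∀ u ∈ Y, ∀ u' ∈ Y,
      Metric.infDist x Y ≤ (dist x u + dist x u' - dist u u') / 2 + α)
    (x x' : X) (γ : ℝ → X) (hγ : IsGeodesicFrom γ x x')
    (y y' : X) (hy : y ∈ Y) (hy' : y' ∈ Y) (η η' : ℝ) (hη : 0 ≤ η) (hη' : 0 ≤ η')
    (hproj : dist x y ≤ Metric.infDist x Y + η)
    (hproj' : dist x' y' ≤ Metric.infDist x' Y + η') :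
    overlap (γ '' Set.Icc (0 : ℝ) (dist x x')) Y ≤
        ENNReal.ofReal (dist y y' + (3 * α + 2 * η + 2 * η' + 6 * δ)) ∧
      ENNReal.ofReal (dist y y') ≤
        overlap (γ '' Set.Icc (0 : ℝ) (dist x x')) Y +
          ENNReal.ofReal (3 * α + 2 * η + 2 * η' + 6 * δ) :=
  overlap_geodesic_quasiconvex_projections_general δ hδ hyp Y α hα hqc x x' γ hγ y y' hy hy' η η'
    hproj hproj'
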